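/- Let (Ω,ℬ,μ) be a probability space and τ : Ω → Ω a measure-preserving transformation that is ergodic. Then for every A ∈ ℬ with μ(A) > 0 and every integer n ≥ 1 there exists B ∈ ℬ such that the sets B, τ⁻¹(B), …, τ^{-(n-1)}(B) are pairwise disjoint and μ(⋃_{i=0}^{n-1} τ^{-i}(B)) ≥ 1 − (n−1)·μ(A). -/

import Mathlib

open MeasureTheory Set ENNReal

/-!
Let `h x` be the first time the orbit of `x` enters `A`; by ergodicity `h` is finite almost
everywhere. Take `B = {h ≡ -1 mod n}`. Along an orbit `h` drops by one per step until it
reaches `0`, so `τ⁻ⁱ B`, `i < n`, are disjoint and contain every point with `h ≥ n - 1`. The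
remaining points lie in `{h = m}` for some `m < n - 1`, and `{h = m} ⊆ τ⁻ᵐ A` has measure at
most `μ A`.
-/

theorem Ergodic.of_measure_preimage_eq {Ω : Type*} [MeasurableSpace Ω] {μ : Measure Ω}
    [IsProbabilityMeasure μ] {τ : Ω → Ω} (hτ : Measurable τ)
    (hmp : ∀ s : Set Ω, MeasurableSet s → μ (τ ⁻¹' s) = μ s)
    (herg : ∀ s : Set Ω, MeasurableSet s → τ ⁻¹' s = s → μ s = 0 ∨ μ s = 1) :
    Ergodic τ μ where
  measurable := hτ
  map_eq := Measure.ext fun s hs => by rw [Measure.map_apply hτ hs, hmp s hs]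
  aeconst_set s hs hinv := by
    rw [Filter.eventuallyConst_set', ae_eq_empty, ae_eq_univ, prob_compl_eq_zero_iff hs]
    exact herg s hs hinv

theorem Ergodic.ae_exists_iterate_mem {Ω : Type*} [MeasurableSpace Ω] {μ : Measure Ω}
    [IsFiniteMeasure μ] {τ : Ω → Ω} (hτ : Ergodic τ μ) {s : Set Ω} (hs : MeasurableSet s)
    (hμs : μ s ≠ 0) : ∀ᵐ x ∂μ, ∃ k, τ^[k] x ∈ s := by
  set S := ⋃ k, τ^[k] ⁻¹' s
  have hS : MeasurableSet S := .iUnion fun k => hs.preimage (hτ.measurable.iterate k)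
  have hinv : τ ⁻¹' S ⊆ S := by
    simp only [S, preimage_iUnion, ← preimage_comp, ← Function.iterate_succ]
    exact iUnion_subset fun k => subset_iUnion_of_subset (k + 1) subset_rfl
  rcases hτ.ae_empty_or_univ_of_preimage_ae_le hS.nullMeasurableSet hinv.eventuallyLE with h | h
  · exact absurd (measure_mono_null (subset_iUnion_of_subset 0 subset_rfl) (ae_eq_empty.1 h)) hμs
  · filter_upwards [mem_ae_iff.2 (ae_eq_univ.1 h)] with x hx
    simpa [S] using hx

section FirstHit

variable {α : Type*} {f : α → α} {s : Set α} {x : α} {i j m m' n : ℕ}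

def firstHit (f : α → α) (s : Set α) (m : ℕ) : Set α :=
  {x | f^[m] x ∈ s ∧ ∀ k < m, f^[k] x ∉ s}

theorem eq_of_mem_firstHit (hm : x ∈ firstHit f s m) (hm' : x ∈ firstHit f s m') : m = m' := by
  by_contra hne
  rcases Nat.lt_or_gt_of_ne hne with h | h
  · exact hm'.2 m h hm.1
  · exact hm.2 m' h hm'.1

theorem iterate_mem_firstHit (hi : i ≤ m) (hx : x ∈ firstHit f s m) :
    f^[i] x ∈ firstHit f s (m - i) := by
  refine ⟨?_, fun k hk => ?_⟩ <;> rw [← Function.iterate_add_apply]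
  · rw [Nat.sub_add_cancel hi]
    exact hx.1
  · exact hx.2 (k + i) (by omega)

theorem exists_mem_firstHit (h : ∃ k, f^[k] x ∈ s) : ∃ m, x ∈ firstHit f s m := by
  classical
  exact ⟨Nat.find h, Nat.find_spec h, fun k hk => Nat.find_min h hk⟩

theorem measurableSet_firstHit [MeasurableSpace α] (hf : Measurable f) (hs : MeasurableSet s)
    (m : ℕ) : MeasurableSet (firstHit f s m) := by
  have : firstHit f s m = f^[m] ⁻¹' s ∩ ⋂ k ∈ Finset.range m, (f^[k] ⁻¹' s)ᶜ := by
    ext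
    simp [firstHit]
  rw [this]
  exact (hs.preimage (hf.iterate m)).inter
    (.biInter (to_countable _) fun k _ => (hs.preimage (hf.iterate k)).compl)

theorem MeasureTheory.MeasurePreserving.measure_firstHit_le [MeasurableSpace α] {μ : Measure α}
    (hf : MeasurePreserving f μ μ) (hs : NullMeasurableSet s μ) (m : ℕ) :
    μ (firstHit f s m) ≤ μ s :=
  (measure_mono fun _ hx => hx.1).trans_eq ((hf.iterate m).measure_preimage hs)

def rokhlinBase (f : α → α) (s : Set α) (n : ℕ) : Set α :=
  {x | ∃ m, n ∣ m + 1 ∧ x ∈ firstHit f s m}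

theorem measurableSet_rokhlinBase [MeasurableSpace α] (hf : Measurable f)
    (hs : MeasurableSet s) (n : ℕ) : MeasurableSet (rokhlinBase f s n) := by
  have : rokhlinBase f s n = ⋃ m ∈ {m | n ∣ m + 1}, firstHit f s m := by
    ext
    simp [rokhlinBase]
  rw [this]
  exact .biUnion (to_countable _) fun m _ => measurableSet_firstHit hf hs m

def rokhlinTower (f : α → α) (s : Set α) (n : ℕ) : Set α :=
  ⋃ i ∈ Finset.range n, f^[i] ⁻¹' rokhlinBase f s n

theorem disjoint_preimage_iterate_rokhlinBase (hi : i < n) (hj : j < n) (hij : i ≠ j) :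
    Disjoint (f^[i] ⁻¹' rokhlinBase f s n) (f^[j] ⁻¹' rokhlinBase f s n) := by
  wlog h : i < j generalizing i j
  · exact (this hj hi hij.symm (by omega)).symm
  rw [Set.disjoint_left]
  rintro x ⟨m, hm, hxm⟩ ⟨m', hm', hxm'⟩
  have hnm : n ≤ m + 1 := Nat.le_of_dvd m.succ_pos hm
  have hshift : f^[j] x ∈ firstHit f s (m - (j - i)) := by
    have := iterate_mem_firstHit (i := j - i) (by omega) hxm
    rwa [← Function.iterate_add_apply, Nat.sub_add_cancel h.le] at this
  have hm'eq := eq_of_mem_firstHit hxm' hshift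
  have hdvd : n ∣ j - i := by
    have := Nat.dvd_sub hm hm'
    rwa [show m + 1 - (m' + 1) = j - i by omega] at this
  have := Nat.eq_zero_of_dvd_of_lt hdvd (by omega)
  omega

theorem mem_rokhlinTower_of_mem_firstHit (hn : 0 < n) (hm : n - 1 ≤ m)
    (hx : x ∈ firstHit f s m) : x ∈ rokhlinTower f s n := by
  set i := (m + 1) % n
  have hin : i < n := Nat.mod_lt _ hn
  refine mem_iUnion₂.2 ⟨i, Finset.mem_range.2 hin, m - i, ?_, iterate_mem_firstHit (by omega) hx⟩
  rw [show m - i + 1 = m + 1 - i by omega]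
  exact Nat.dvd_sub_mod (m + 1)

end FirstHit

theorem Ergodic.measure_univ_sub_le_measure_rokhlinTower {Ω : Type*} [MeasurableSpace Ω]
    {μ : Measure Ω} [IsFiniteMeasure μ] {τ : Ω → Ω} (hτ : Ergodic τ μ) {s : Set Ω}
    (hs : MeasurableSet s) (hμs : μ s ≠ 0) {n : ℕ} (hn : 0 < n) :
    μ univ - ((n - 1 : ℕ) : ℝ≥0∞) * μ s ≤ μ (rokhlinTower τ s n) := by
  set U := rokhlinTower τ s n
  have hcompl : Uᶜ ≤ᵐ[μ] ⋃ m ∈ Finset.range (n - 1), firstHit τ s m := by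
    filter_upwards [hτ.ae_exists_iterate_mem hs hμs] with x hx hxU
    obtain ⟨m, hm⟩ := exists_mem_firstHit hx
    have hmn : m < n - 1 := by
      by_contra! h
      exact hxU (mem_rokhlinTower_of_mem_firstHit hn h hm)
    exact mem_iUnion₂.2 ⟨m, Finset.mem_range.2 hmn, hm⟩
  have hμcompl : μ Uᶜ ≤ ((n - 1 : ℕ) : ℝ≥0∞) * μ s :=
    calc μ Uᶜ ≤ μ (⋃ m ∈ Finset.range (n - 1), firstHit τ s m) := measure_mono_ae hcompl
      _ ≤ ∑ m ∈ Finset.range (n - 1), μ (firstHit τ s m) := measure_biUnion_finset_le _ _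
      _ ≤ ∑ m ∈ Finset.range (n - 1), μ s := Finset.sum_le_sum fun m _ =>
          hτ.toMeasurePreserving.measure_firstHit_le hs.nullMeasurableSet m
      _ = ((n - 1 : ℕ) : ℝ≥0∞) * μ s := by simp
  calc μ univ - ((n - 1 : ℕ) : ℝ≥0∞) * μ s ≤ μ univ - μ Uᶜ := tsub_le_tsub_left hμcompl _
    _ ≤ μ U := by
      rw [tsub_le_iff_right]
      exact measure_univ_le_add_compl U

theorem kakutani_rokhlin_measure_free {Ω : Type*} [MeasurableSpace Ω] (μ : Measure Ω)
    [IsProbabilityMeasure μ] (τ : Ω → Ω) (hτ : Measurable τ)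
    (hmp : ∀ A : Set Ω, MeasurableSet A → μ (τ ⁻¹' A) = μ A)
    (herg : ∀ A : Set Ω, MeasurableSet A → μ (symmDiff (τ ⁻¹' A) A) = 0 →
      μ A = 0 ∨ μ A = 1)
    (A : Set Ω) (hA : MeasurableSet A) (hApos : 0 < μ A) (n : ℕ) (hn : 1 ≤ n) :
    ∃ B : Set Ω, MeasurableSet B ∧
      (∀ i j : ℕ, i < n → j < n → i ≠ j → Disjoint (τ^[i] ⁻¹' B) (τ^[j] ⁻¹' B)) ∧
      1 - ((n - 1 : ℕ) : ℝ≥0∞) * μ A ≤ μ (⋃ i ∈ Finset.range n, τ^[i] ⁻¹' B) := by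
  have hτerg : Ergodic τ μ :=
    .of_measure_preimage_eq hτ hmp fun s hs hinv => herg s hs (by simp [hinv])
  refine ⟨rokhlinBase τ A n, measurableSet_rokhlinBase hτ hA n,
    fun i j hi hj hij => disjoint_preimage_iterate_rokhlinBase hi hj hij, ?_⟩
  rw [← measure_univ (μ := μ)]
  exact hτerg.measure_univ_sub_le_measure_rokhlinTower hA hApos.ne' hn
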